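/- For any vector ψ ∈ ℂ²⊗ℂ² there exist a unitary operator U on ℂ² and real numbers α, β, γ, δ such that (U⊗U)ψ = (α+iβ)|0,1⟩ + (α+iγ)|1,0⟩ + δ|1,1⟩. -/

import Mathlib

/-!
Identify `ψ` with the matrix `Ψ k l = ψ (k, l)`; then `(U ⊗ U) ψ` is `U Ψ Uᵀ`, whose `(i, i)` entry
is the quadratic form `v ↦ v Ψ vᵀ` evaluated at the `i`-th row `v` of `U`. Over `ℂ` this form has a
unit isotropic vector `(a, b)`, which is the first row of the unitary `V = [[a, b], [-b̄, ā]]`.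
Multiplying `V` on the left by a diagonal unitary `diag(e₀, e₁)` turns the entries `Φ i j` of
`Φ = V Ψ Vᵀ` into `e i * e j * Φ i j`. Choosing `e₁²` to make `Φ 1 1` real and `e₀ e₁` to make
`Φ 0 1 - Φ 1 0` purely imaginary gives the two off-diagonal entries a common real part.
-/

open Matrix Complex ComplexConjugate

lemma Complex.exists_norm_eq_one_mul_eq_norm (z : ℂ) : ∃ w : ℂ, ‖w‖ = 1 ∧ w * z = ‖z‖ := by
  refine ⟨exp (↑(-arg z) * I), norm_exp_ofReal_mul_I _, ?_⟩
  calc exp (↑(-arg z) * I) * z = exp (↑(-arg z) * I) * (‖z‖ * exp (arg z * I)) := by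
        rw [norm_mul_exp_arg_mul_I]
    _ = ‖z‖ := by
        rw [mul_left_comm, ← exp_add, ofReal_neg, neg_mul, neg_add_cancel, exp_zero, mul_one]

lemma Complex.exists_norm_eq_one_sq_mul_eq_norm (z : ℂ) :
    ∃ u : ℂ, ‖u‖ = 1 ∧ u ^ 2 * z = ‖z‖ := by
  obtain ⟨w, hw, hwz⟩ := exists_norm_eq_one_mul_eq_norm z
  obtain ⟨u, rfl⟩ := IsAlgClosed.exists_pow_nat_eq w two_pos
  refine ⟨u, ?_, hwz⟩
  rwa [norm_pow, pow_eq_one_iff_of_nonneg (norm_nonneg u) two_ne_zero] at hw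

lemma Complex.exists_norm_eq_one_re_mul_eq_zero (z : ℂ) : ∃ m : ℂ, ‖m‖ = 1 ∧ (m * z).re = 0 := by
  obtain ⟨w, hw, hwz⟩ := exists_norm_eq_one_mul_eq_norm z
  refine ⟨I * w, by rw [norm_mul, norm_I, hw, one_mul], ?_⟩
  rw [mul_assoc, hwz, mul_comm, re_ofReal_mul, I_re, mul_zero]

lemma exists_ne_zero_quadratic_eq_zero {K : Type*} [Field K] [IsAlgClosed K] [NeZero (2 : K)]
    (p q s : K) : ∃ a b : K, (a ≠ 0 ∨ b ≠ 0) ∧ p * a ^ 2 + q * (a * b) + s * b ^ 2 = 0 := by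
  by_cases hp : p = 0
  · exact ⟨1, 0, Or.inl one_ne_zero, by simp [hp]⟩
  obtain ⟨w, hw⟩ := IsAlgClosed.exists_pow_nat_eq (q ^ 2 - 4 * p * s) two_pos
  refine ⟨w - q, 2 * p, Or.inr (mul_ne_zero two_ne_zero hp), ?_⟩
  linear_combination p * hw

lemma exists_norm_sq_add_norm_sq_eq_one_quadratic_eq_zero (p q s : ℂ) :
    ∃ a b : ℂ, ‖a‖ ^ 2 + ‖b‖ ^ 2 = 1 ∧ p * a ^ 2 + q * (a * b) + s * b ^ 2 = 0 := by
  obtain ⟨a, b, hab, hq⟩ := exists_ne_zero_quadratic_eq_zero p q s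
  have hpos : 0 < ‖a‖ ^ 2 + ‖b‖ ^ 2 := by
    rcases hab with ha | hb
    · exact add_pos_of_pos_of_nonneg (pow_pos (norm_pos_iff.2 ha) 2) (sq_nonneg _)
    · exact add_pos_of_nonneg_of_pos (sq_nonneg _) (pow_pos (norm_pos_iff.2 hb) 2)
  set c : ℝ := (√(‖a‖ ^ 2 + ‖b‖ ^ 2))⁻¹
  have hc : c ^ 2 * (‖a‖ ^ 2 + ‖b‖ ^ 2) = 1 := by
    rw [inv_pow, Real.sq_sqrt hpos.le, inv_mul_cancel₀ hpos.ne']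
  refine ⟨c * a, c * b, ?_, ?_⟩
  · simp only [norm_mul, norm_real, Real.norm_eq_abs, mul_pow, sq_abs]
    linear_combination hc
  · linear_combination (c : ℂ) ^ 2 * hq

section CommRing

variable {R : Type*} [CommRing R]

lemma Matrix.sum_mul_mul_eq_mul_mul_transpose {m n : Type*} [Fintype n] (U : Matrix m n R)
    (ψ : n × n → R) (i j : m) :
    ∑ q : n × n, U i q.1 * U j q.2 * ψ q = (U * of (fun k l => ψ (k, l)) * Uᵀ) i j := by
  simp only [mul_apply, Fintype.sum_prod_type, Finset.sum_mul, of_apply, transpose_apply]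
  rw [Finset.sum_comm]
  exact Finset.sum_congr rfl fun k _ => Finset.sum_congr rfl fun l _ => by ring

lemma Matrix.diagonal_mul_mul_transpose_apply {n : Type*} [Fintype n] [DecidableEq n]
    (e : n → R) (Φ : Matrix n n R) (i j : n) :
    (diagonal e * Φ * (diagonal e)ᵀ) i j = e i * e j * Φ i j := by
  rw [diagonal_transpose, mul_diagonal, diagonal_mul]
  ring

variable [StarRing R]

lemma Matrix.diagonal_mem_unitaryGroup {n : Type*} [Fintype n] [DecidableEq n] {e : n → R}
    (he : ∀ i, e i * star (e i) = 1) : diagonal e ∈ unitaryGroup n R := by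
  rw [mem_unitaryGroup_iff, star_eq_conjTranspose, diagonal_conjTranspose, diagonal_mul_diagonal,
    ← diagonal_one]
  exact congrArg diagonal (funext he)

def su2Matrix (a b : R) : Matrix (Fin 2) (Fin 2) R := !![a, b; -star b, star a]

lemma su2Matrix_mem_unitaryGroup {a b : R} (hab : a * star a + b * star b = 1) :
    su2Matrix a b ∈ unitaryGroup (Fin 2) R := by
  rw [mem_unitaryGroup_iff]
  ext i j
  fin_cases i <;> fin_cases j <;> simp [su2Matrix, mul_apply, Fin.sum_univ_two] <;>
    first | linear_combination hab | ring

lemma su2Matrix_mul_mul_transpose_apply_zero_zero (a b : R) (Ψ : Matrix (Fin 2) (Fin 2) R) :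
    (su2Matrix a b * Ψ * (su2Matrix a b)ᵀ) 0 0
      = Ψ 0 0 * a ^ 2 + (Ψ 0 1 + Ψ 1 0) * (a * b) + Ψ 1 1 * b ^ 2 := by
  simp [su2Matrix, mul_apply, Fin.sum_univ_two, vecMul, dotProduct]
  ring

end CommRing

theorem exists_unitary_mul_mul_transpose_eq_canonical (Ψ : Matrix (Fin 2) (Fin 2) ℂ) :
    ∃ U ∈ unitaryGroup (Fin 2) ℂ, ∃ α β γ δ : ℝ,
      (U * Ψ * Uᵀ) 0 0 = 0 ∧ (U * Ψ * Uᵀ) 0 1 = α + β * I ∧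
      (U * Ψ * Uᵀ) 1 0 = α + γ * I ∧ (U * Ψ * Uᵀ) 1 1 = δ := by
  obtain ⟨a, b, hab, hiso⟩ :=
    exists_norm_sq_add_norm_sq_eq_one_quadratic_eq_zero (Ψ 0 0) (Ψ 0 1 + Ψ 1 0) (Ψ 1 1)
  have hV : su2Matrix a b ∈ unitaryGroup (Fin 2) ℂ := by
    refine su2Matrix_mem_unitaryGroup ?_
    simp only [star_def, mul_conj']
    exact_mod_cast hab
  set Φ := su2Matrix a b * Ψ * (su2Matrix a b)ᵀ
  have hΦ00 : Φ 0 0 = 0 := (su2Matrix_mul_mul_transpose_apply_zero_zero a b Ψ).trans hiso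
  obtain ⟨u, hu, hΦ11⟩ := exists_norm_eq_one_sq_mul_eq_norm (Φ 1 1)
  obtain ⟨m, hm, hΦre⟩ := exists_norm_eq_one_re_mul_eq_zero (Φ 0 1 - Φ 1 0)
  rw [mul_sub, sub_re, sub_eq_zero] at hΦre
  set e : Fin 2 → ℂ := ![m * conj u, u]
  have he : ∀ i, e i * star (e i) = 1 := by
    refine Fin.forall_fin_two.2 ⟨?_, ?_⟩
    · show m * conj u * conj (m * conj u) = 1
      rw [map_mul, conj_conj, mul_mul_mul_comm, mul_conj', conj_mul', hm, hu]
      simp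
    · show u * conj u = 1
      rw [mul_conj', hu]
      simp
  have he01 : e 0 * e 1 = m := by
    show m * conj u * u = m
    rw [mul_assoc, conj_mul', hu]
    simp
  have hconj : diagonal e * su2Matrix a b * Ψ * (diagonal e * su2Matrix a b)ᵀ
      = diagonal e * Φ * (diagonal e)ᵀ := by
    simp only [Φ, transpose_mul, Matrix.mul_assoc]
  refine ⟨diagonal e * su2Matrix a b, mul_mem (diagonal_mem_unitaryGroup he) hV,
    (m * Φ 0 1).re, (m * Φ 0 1).im, (m * Φ 1 0).im, ‖Φ 1 1‖, ?_⟩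
  simp only [hconj, diagonal_mul_mul_transpose_apply]
  refine ⟨by rw [hΦ00, mul_zero], by rw [he01, re_add_im], ?_, by rw [← sq]; exact hΦ11⟩
  rw [mul_comm (e 1), he01, hΦre, re_add_im]

theorem canonical_form (ψ : Fin 2 × Fin 2 → ℂ) :
    ∃ U : Matrix (Fin 2) (Fin 2) ℂ, U ∈ Matrix.unitaryGroup (Fin 2) ℂ ∧
      ∃ α β γ δ : ℝ,
        (∑ q : Fin 2 × Fin 2, U 0 q.1 * U 0 q.2 * ψ q) = 0 ∧
        (∑ q : Fin 2 × Fin 2, U 0 q.1 * U 1 q.2 * ψ q) = (α : ℂ) + (β : ℂ) * Complex.I ∧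
        (∑ q : Fin 2 × Fin 2, U 1 q.1 * U 0 q.2 * ψ q) = (α : ℂ) + (γ : ℂ) * Complex.I ∧
        (∑ q : Fin 2 × Fin 2, U 1 q.1 * U 1 q.2 * ψ q) = (δ : ℂ) := by
  obtain ⟨U, hU, α, β, γ, δ, h⟩ :=
    exists_unitary_mul_mul_transpose_eq_canonical (of fun k l => ψ (k, l))
  refine ⟨U, hU, α, β, γ, δ, ?_⟩
  simpa only [sum_mul_mul_eq_mul_mul_transpose] using h
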